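/- Let n, p be positive integers and q : ℕ → ℝⁿ → ℝ^p → ℝⁿ a time-varying discrete-time system map. Call γ : [0,∞) → [0,∞) class-K if it is continuous, strictly increasing, and γ(0) = 0; class-K∞ if in addition γ(r) → ∞ as r → ∞; and call β : [0,∞) × ℕ → [0,∞) class-KL if β(·, t) is class-K for each fixed t and, for each fixed r, t ↦ β(r, t) is nonincreasing with β(r, t) → 0 as t → ∞. Suppose there exist V : ℕ → ℝⁿ → ℝ with V(t, ·) continuous for each t, class-K∞ functions α₁, α₂, α₃, and a class-K function σ such that for all t ∈ ℕ, x ∈ ℝⁿ, v ∈ ℝ^p: α₁(‖x‖) ≤ V(t, x) ≤ α₂(‖x‖) and V(t+1, q(t, x, v)) − V(t, x) ≤ −α₃(‖x‖) + σ(‖v‖). Then the system is globally input-to-state stable: there exist a class-KL function β and a class-K function γ such that for every initial condition x(0) ∈ ℝⁿ and every disturbance sequence v : ℕ → ℝ^p, the trajectory defined by x(t+1) = q(t, x(t), v(t)) satisfies ‖x(t)‖ ≤ β(‖x(0)‖, t) + γ(max_{0 ≤ k ≤ t−1} ‖v(k)‖) for all t ≥ 1. -/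

import Mathlib

/-- A comparison function `γ : [0,∞) → [0,∞)` of class `K`: continuous, strictly
increasing, and zero at zero (represented as a function on `ℝ`, restricted to
the nonnegative reals, with nonnegative values there). -/
def IsClassK (γ : ℝ → ℝ) : Prop :=
  ContinuousOn γ (Set.Ici 0) ∧ StrictMonoOn γ (Set.Ici 0) ∧ γ 0 = 0 ∧
    ∀ r : ℝ, 0 ≤ r → 0 ≤ γ r

/-- A class `K∞` function: class `K` and unbounded. -/
def IsClassKInf (γ : ℝ → ℝ) : Prop :=
  IsClassK γ ∧ Filter.Tendsto γ Filter.atTop Filter.atTop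

/-- A class `KL` function `β : [0,∞) × ℕ → [0,∞)`: class `K` in its first
argument for each fixed time, and nonincreasing to `0` in time for each fixed
first argument. -/
def IsClassKL (β : ℝ → ℕ → ℝ) : Prop :=
  (∀ t : ℕ, IsClassK (fun r => β r t)) ∧
    ∀ r : ℝ, 0 ≤ r →
      (Antitone fun t => β r t) ∧
        Filter.Tendsto (fun t => β r t) Filter.atTop (nhds 0)

/-!
Along a trajectory whose disturbance is bounded by `s`, the values `W k = V k (x k)` satisfy
`W (k+1) ≤ W k - α₃ ‖x k‖ + σ s`. Where `α₃ ‖x k‖ ≥ 2 σ s`, half of the decrease survives, and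
since `‖x k‖ ≥ α₂⁻¹ (W k)` this gives `W (k+1) ≤ ψ (W k)` for a class `K` function `ψ` lying
strictly below the identity on `(0, ∞)`; elsewhere `W (k+1) ≤ E := α₂ (α₃⁻¹ (2 σ s)) + σ s`.
As `ψ` is increasing with `ψ E ≤ E`, induction gives `W t ≤ max (ψ^[t] (W 0)) E`, and `ψ^[t] → 0`
pointwise. Hence `‖x t‖ ≤ α₁⁻¹ (ψ^[t] (α₂ ‖x 0‖)) + α₁⁻¹ E`, the ISS estimate with
`β r t = α₁⁻¹ (ψ^[t] (α₂ r))` and `γ s = α₁⁻¹ (α₂ (α₃⁻¹ (2 σ s)) + σ s)`.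
-/

open Set Filter Topology

namespace IsClassK

variable {f g : ℝ → ℝ}

lemma continuousOn (hf : IsClassK f) : ContinuousOn f (Ici 0) := hf.1

lemma strictMonoOn (hf : IsClassK f) : StrictMonoOn f (Ici 0) := hf.2.1

lemma map_zero (hf : IsClassK f) : f 0 = 0 := hf.2.2.1

lemma nonneg (hf : IsClassK f) {r : ℝ} (hr : 0 ≤ r) : 0 ≤ f r := hf.2.2.2 r hr

lemma mapsTo (hf : IsClassK f) : MapsTo f (Ici 0) (Ici 0) := fun _ hr => hf.nonneg hr

lemma monotoneOn (hf : IsClassK f) : MonotoneOn f (Ici 0) := hf.strictMonoOn.monotoneOn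

lemma pos (hf : IsClassK f) {r : ℝ} (hr : 0 < r) : 0 < f r := by
  simpa [hf.map_zero] using hf.strictMonoOn self_mem_Ici hr.le hr

lemma apply_max_le_add (hf : IsClassK f) {a b : ℝ} (ha : 0 ≤ a)
    (hb : 0 ≤ b) : f (max a b) ≤ f a + f b := by
  rcases le_total a b with h | h
  · rw [max_eq_right h]; linarith [hf.nonneg ha]
  · rw [max_eq_left h]; linarith [hf.nonneg hb]

lemma comp (hf : IsClassK f) (hg : IsClassK g) : IsClassK (f ∘ g) :=
  ⟨hf.continuousOn.comp hg.continuousOn hg.mapsTo, hf.strictMonoOn.comp hg.strictMonoOn hg.mapsTo, by simp [hf.map_zero, hg.map_zero],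
    fun _ hr => hf.nonneg (hg.nonneg hr)⟩

lemma add (hf : IsClassK f) (hg : IsClassK g) : IsClassK fun r => f r + g r :=
  ⟨hf.continuousOn.add hg.continuousOn, fun _ ha _ hb hab => add_lt_add (hf.strictMonoOn ha hb hab) (hg.strictMonoOn ha hb hab),
    by simp [hf.map_zero, hg.map_zero], fun _ hr => add_nonneg (hf.nonneg hr) (hg.nonneg hr)⟩

lemma const_mul (hf : IsClassK f) {c : ℝ} (hc : 0 < c) : IsClassK fun r => c * f r :=
  ⟨continuousOn_const.mul hf.continuousOn, fun _ ha _ hb hab => mul_lt_mul_of_pos_left (hf.strictMonoOn ha hb hab) hc,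
    by simp [hf.map_zero], fun _ hr => mul_nonneg hc.le (hf.nonneg hr)⟩

lemma iterate (hf : IsClassK f) (n : ℕ) : IsClassK f^[n] := by
  induction n with
  | zero => exact ⟨continuousOn_id, strictMonoOn_id, rfl, fun _ hr => hr⟩
  | succ n ih => rw [Function.iterate_succ']; exact hf.comp ih

lemma continuous_comp_max_zero (hf : IsClassK f) : Continuous fun r => f (max r 0) :=
  hf.continuousOn.comp_continuous (continuous_id.max continuous_const) fun r => le_max_right r 0

/-- A strictly monotone map of `[0, ∞)` onto itself has no jumps, so it is continuous. -/
lemma of_strictMonoOn_of_surjOn (hmono : StrictMonoOn f (Ici 0))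
    (hsurj : SurjOn f (Ici 0) (Ici 0)) (hmaps : MapsTo f (Ici 0) (Ici 0)) (h0 : f 0 = 0) :
    IsClassK f := by
  refine ⟨fun a ha => ?_, hmono, h0, fun r hr => hmaps hr⟩
  rcases (mem_Ici.mp ha).eq_or_lt with rfl | hpos
  · refine hmono.continuousWithinAt_right_of_surjOn self_mem_nhdsWithin ?_
    rw [h0]
    exact hsurj.mono Subset.rfl Ioi_subset_Ici_self
  · have hfa : 0 < f a := h0 ▸ hmono self_mem_Ici ha hpos
    refine (hmono.continuousAt_of_image_mem_nhds (Ici_mem_nhds hpos) ?_).continuousWithinAt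
    exact mem_of_superset (Ici_mem_nhds hfa) hsurj

end IsClassK

noncomputable def kInv (α : ℝ → ℝ) : ℝ → ℝ := Function.invFunOn α (Ici 0)

namespace IsClassKInf

variable {α : ℝ → ℝ}

lemma surjOn (h : IsClassKInf α) : SurjOn α (Ici 0) (Ici 0) := by
  intro y hy
  obtain ⟨R, hyR, hR⟩ := ((h.2.eventually_ge_atTop y).and (eventually_ge_atTop 0)).exists
  exact h.1.continuousOn.surjOn_Icc self_mem_Ici (mem_Ici.mpr hR) ⟨by rwa [h.1.map_zero], hyR⟩

lemma kInv_nonneg (h : IsClassKInf α) {y : ℝ} (hy : 0 ≤ y) : 0 ≤ kInv α y :=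
  (Function.invFunOn_pos (h.surjOn hy)).1

lemma apply_kInv (h : IsClassKInf α) {y : ℝ} (hy : 0 ≤ y) : α (kInv α y) = y :=
  (Function.invFunOn_pos (h.surjOn hy)).2

lemma kInv_apply (h : IsClassKInf α) {r : ℝ} (hr : 0 ≤ r) : kInv α (α r) = r :=
  h.1.strictMonoOn.injOn.leftInvOn_invFunOn hr

lemma le_kInv_iff (h : IsClassKInf α) {r y : ℝ} (hr : 0 ≤ r) (hy : 0 ≤ y) :
    r ≤ kInv α y ↔ α r ≤ y := by
  conv_rhs => rw [← h.apply_kInv hy]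
  exact (h.1.strictMonoOn.le_iff_le hr (h.kInv_nonneg hy)).symm

lemma kInv_le_iff (h : IsClassKInf α) {r y : ℝ} (hr : 0 ≤ r) (hy : 0 ≤ y) :
    kInv α y ≤ r ↔ y ≤ α r := by
  conv_rhs => rw [← h.apply_kInv hy]
  exact (h.1.strictMonoOn.le_iff_le (h.kInv_nonneg hy) hr).symm

lemma isClassK_kInv (h : IsClassKInf α) : IsClassK (kInv α) := by
  refine .of_strictMonoOn_of_surjOn (fun y₁ hy₁ y₂ hy₂ hlt => ?_)
    (fun r hr => ⟨α r, h.1.nonneg hr, h.kInv_apply hr⟩) (fun _ hy => h.kInv_nonneg hy)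
    (by simpa [h.1.map_zero] using h.kInv_apply le_rfl)
  rw [← h.apply_kInv hy₁, ← h.apply_kInv hy₂] at hlt
  exact (h.1.strictMonoOn.lt_iff_lt (h.kInv_nonneg hy₁) (h.kInv_nonneg hy₂)).mp hlt

end IsClassKInf

lemma continuousOn_sSup_image_Icc_zero {f : ℝ → ℝ} (hf : Continuous f) :
    ContinuousOn (fun r => sSup (f '' Icc 0 r)) (Ici 0) := by
  have hcont : Continuous fun r => sSup ((fun s => f (r * s)) '' Icc 0 1) :=
    isCompact_Icc.continuous_sSup (hf.comp (continuous_fst.mul continuous_snd))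
  refine hcont.continuousOn.congr fun r hr => ?_
  show sSup (f '' Icc 0 r) = sSup ((fun s => f (r * s)) '' Icc 0 1)
  rw [← image_image f (r * ·), image_mul_left_Icc (mem_Ici.mp hr) zero_le_one, mul_zero, mul_one]

/-- The monotone majorant `ψ` of `id - ρ` is the average of `id` and the running maximum of
`id - ρ`; averaging with `id` makes it strictly increasing while keeping it below `id`. -/
lemma IsClassK.exists_isClassK_sub_le_lt_self {ρ : ℝ → ℝ} (hρ : IsClassK ρ) :
    ∃ ψ : ℝ → ℝ, IsClassK ψ ∧ (∀ r, 0 < r → ψ r < r) ∧ ∀ r, 0 ≤ r → r - ρ r ≤ ψ r := by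
  set f : ℝ → ℝ := fun r => r - ρ (max r 0) with hf_def
  set m : ℝ → ℝ := fun r => sSup (f '' Icc 0 r)
  have hf : Continuous f := continuous_id.sub hρ.continuous_comp_max_zero
  have hf_apply : ∀ {r}, 0 ≤ r → f r = r - ρ r := fun hr => by simp [hf_def, max_eq_left hr]
  have hbdd : ∀ r, BddAbove (f '' Icc 0 r) := fun r => isCompact_Icc.bddAbove_image hf.continuousOn
  have le_m : ∀ {r s}, s ∈ Icc 0 r → f s ≤ m r := fun hs => le_csSup (hbdd _) (mem_image_of_mem f hs)
  have m_mono : MonotoneOn m (Ici 0) := fun a ha b _ hab =>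
    csSup_le_csSup (hbdd b) ((nonempty_Icc.2 (mem_Ici.mp ha)).image f)
      (image_mono (Icc_subset_Icc_right hab))
  have m_zero : m 0 = 0 := by simp [m, hf_def, hρ.map_zero]
  have m_nonneg : ∀ {r}, 0 ≤ r → 0 ≤ m r := fun hr => m_zero ▸ m_mono self_mem_Ici hr hr
  have m_lt : ∀ r, 0 < r → m r < r := by
    intro r hr
    obtain ⟨s, hs, hms⟩ := (isCompact_Icc.image hf).sSup_mem ((nonempty_Icc.2 hr.le).image f)
    show sSup (f '' Icc 0 r) < r
    rw [← hms, hf_apply hs.1]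
    rcases hs.2.lt_or_eq with hsr | rfl
    · linarith [hρ.nonneg hs.1]
    · linarith [hρ.pos hr]
  refine ⟨fun r => (r + m r) / 2, ⟨?_, ?_, by simp [m_zero], ?_⟩, ?_, ?_⟩
  · exact (continuousOn_id.add (continuousOn_sSup_image_Icc_zero hf)).div_const 2
  · intro a ha b hb hab
    linarith [m_mono ha hb hab.le]
  · intro r hr
    linarith [m_nonneg hr]
  · intro r hr
    linarith [m_lt r hr]
  · intro r hr
    have := le_m (right_mem_Icc.2 hr)
    rw [hf_apply hr] at this
    linarith [hρ.nonneg hr]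

section Iterate

variable {ψ : ℝ → ℝ}

lemma IsClassK.le_self_of_lt_self (hψ : IsClassK ψ) (hlt : ∀ r, 0 < r → ψ r < r) {r : ℝ}
    (hr : 0 ≤ r) : ψ r ≤ r := by
  rcases hr.eq_or_lt with rfl | hpos
  · exact hψ.map_zero.le
  · exact (hlt r hpos).le

lemma IsClassK.antitone_iterate (hψ : IsClassK ψ) (hlt : ∀ r, 0 < r → ψ r < r) {r : ℝ}
    (hr : 0 ≤ r) : Antitone fun t => ψ^[t] r :=
  antitone_nat_of_succ_le fun t => by
    rw [Function.iterate_succ_apply']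
    exact hψ.le_self_of_lt_self hlt ((hψ.iterate t).nonneg hr)

/-- The iterates decrease to their infimum `L`, which is a fixed point of `ψ` by continuity;
as `ψ` has no fixed point in `(0, ∞)`, `L = 0`. -/
lemma IsClassK.tendsto_iterate_nhds_zero (hψ : IsClassK ψ) (hlt : ∀ r, 0 < r → ψ r < r) {r : ℝ}
    (hr : 0 ≤ r) : Tendsto (fun t => ψ^[t] r) atTop (𝓝 0) := by
  have hnonneg : ∀ t, 0 ≤ ψ^[t] r := fun t => (hψ.iterate t).nonneg hr
  have hL := tendsto_atTop_ciInf (hψ.antitone_iterate hlt hr) ⟨0, forall_mem_range.2 hnonneg⟩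
  rcases (le_ciInf hnonneg).eq_or_lt with h | hpos
  · rwa [← h] at hL
  · exact absurd (isFixedPt_of_tendsto_iterate hL (hψ.continuousOn.continuousAt (Ici_mem_nhds hpos)))
      (hlt _ hpos).ne

lemma IsClassK.isClassKL_comp_iterate {a b : ℝ → ℝ} (ha : IsClassK a) (hb : IsClassK b)
    (hψ : IsClassK ψ) (hlt : ∀ r, 0 < r → ψ r < r) :
    IsClassKL fun r t => a (ψ^[t] (b r)) := by
  refine ⟨fun t => (ha.comp (hψ.iterate t)).comp hb, fun r hr => ⟨?_, ?_⟩⟩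
  · intro t₁ t₂ h
    exact ha.monotoneOn ((hψ.iterate t₂).nonneg (hb.nonneg hr))
      ((hψ.iterate t₁).nonneg (hb.nonneg hr)) (hψ.antitone_iterate hlt (hb.nonneg hr) h)
  · have h0 : Tendsto (fun t => ψ^[t] (b r)) atTop (𝓝[Ici 0] 0) :=
      tendsto_nhdsWithin_iff.2 ⟨hψ.tendsto_iterate_nhds_zero hlt (hb.nonneg hr),
        Eventually.of_forall fun t => (hψ.iterate t).nonneg (hb.nonneg hr)⟩
    have := (ha.continuousOn 0 self_mem_Ici).tendsto.comp h0
    rwa [ha.map_zero] at this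

end Iterate

lemma le_max_iterate_of_le_max {ψ : ℝ → ℝ} {E : ℝ} {w : ℕ → ℝ} {t : ℕ}
    (hψ : MonotoneOn ψ (Ici 0)) (hmaps : MapsTo ψ (Ici 0) (Ici 0)) (hE : 0 ≤ E)
    (hψE : ψ E ≤ E) (hw : ∀ k, 0 ≤ w k) (hstep : ∀ k < t, w (k + 1) ≤ max (ψ (w k)) E) :
    w t ≤ max (ψ^[t] (w 0)) E := by
  induction t with
  | zero => exact le_max_left _ _
  | succ t ih =>
    have ih := ih fun k hk => hstep k (hk.trans t.lt_succ_self)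
    refine (hstep t t.lt_succ_self).trans (max_le ?_ (le_max_right _ _))
    rw [Function.iterate_succ_apply']
    rcases le_max_iff.1 ih with h | h
    · exact le_max_of_le_left (hψ (hw t) (hmaps.iterate t (hw 0)) h)
    · exact le_max_of_le_right ((hψ (hw t) hE h).trans hψE)

structure IsISSLyapunov {X U : Type*} [Norm X] [Norm U] (q : ℕ → X → U → X)
    (V : ℕ → X → ℝ) (α₁ α₂ α₃ σ : ℝ → ℝ) : Prop where
  isClassKInf_α₁ : IsClassKInf α₁
  isClassKInf_α₂ : IsClassKInf α₂
  isClassKInf_α₃ : IsClassKInf α₃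
  isClassK_σ : IsClassK σ
  le_apply : ∀ t x, α₁ ‖x‖ ≤ V t x
  apply_le : ∀ t x, V t x ≤ α₂ ‖x‖
  sub_le : ∀ t x v, V (t + 1) (q t x v) - V t x ≤ -α₃ ‖x‖ + σ ‖v‖

namespace IsISSLyapunov

variable {X U : Type*} [SeminormedAddGroup X] [SeminormedAddGroup U] {q : ℕ → X → U → X}
  {V : ℕ → X → ℝ} {α₁ α₂ α₃ σ ψ : ℝ → ℝ}

lemma nonneg (hV : IsISSLyapunov q V α₁ α₂ α₃ σ) (t : ℕ) (x : X) : 0 ≤ V t x :=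
  (hV.isClassKInf_α₁.1.nonneg (norm_nonneg x)).trans (hV.le_apply t x)

lemma apply_succ_le_max (hV : IsISSLyapunov q V α₁ α₂ α₃ σ)
    (hψ : ∀ r, 0 ≤ r → r - 2⁻¹ * α₃ (kInv α₂ r) ≤ ψ r) {s : ℝ} (hs : 0 ≤ s) (t : ℕ) (x : X)
    {v : U} (hv : ‖v‖ ≤ s) :
    V (t + 1) (q t x v) ≤ max (ψ (V t x)) (α₂ (kInv α₃ (2 * σ s)) + σ s) := by
  have hσ := hV.isClassK_σ.monotoneOn (norm_nonneg v) hs hv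
  have hdec := hV.sub_le t x v
  have hσs := hV.isClassK_σ.nonneg hs
  rcases le_or_gt (α₃ ‖x‖) (2 * σ s) with hx | hx
  · have hR : ‖x‖ ≤ kInv α₃ (2 * σ s) :=
      (hV.isClassKInf_α₃.le_kInv_iff (norm_nonneg x) (by positivity)).2 hx
    have := hV.isClassKInf_α₂.1.monotoneOn (norm_nonneg x)
      (hV.isClassKInf_α₃.kInv_nonneg (by positivity)) hR
    have := hV.apply_le t x
    have := hV.isClassKInf_α₃.1.nonneg (norm_nonneg x)
    exact le_max_of_le_right (by linarith)
  · have hk : kInv α₂ (V t x) ≤ ‖x‖ :=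
      (hV.isClassKInf_α₂.kInv_le_iff (norm_nonneg x) (hV.nonneg t x)).2 (hV.apply_le t x)
    have := hV.isClassKInf_α₃.1.monotoneOn (hV.isClassKInf_α₂.kInv_nonneg (hV.nonneg t x))
      (norm_nonneg x) hk
    have := hψ _ (hV.nonneg t x)
    exact le_max_of_le_left (by linarith)

lemma norm_le (hV : IsISSLyapunov q V α₁ α₂ α₃ σ) (hψ : IsClassK ψ)
    (hlt : ∀ r, 0 < r → ψ r < r) (hψ_ge : ∀ r, 0 ≤ r → r - 2⁻¹ * α₃ (kInv α₂ r) ≤ ψ r)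
    {x : ℕ → X} {v : ℕ → U} {t : ℕ} (hx : ∀ k < t, x (k + 1) = q k (x k) (v k)) {s : ℝ}
    (hs : 0 ≤ s) (hv : ∀ k < t, ‖v k‖ ≤ s) :
    ‖x t‖ ≤ kInv α₁ (ψ^[t] (α₂ ‖x 0‖)) + kInv α₁ (α₂ (kInv α₃ (2 * σ s)) + σ s) := by
  set E := α₂ (kInv α₃ (2 * σ s)) + σ s
  set A := ψ^[t] (α₂ ‖x 0‖)
  have hσs := hV.isClassK_σ.nonneg hs
  have hE : 0 ≤ E := add_nonneg (hV.isClassKInf_α₂.1.nonneg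
    (hV.isClassKInf_α₃.kInv_nonneg (by positivity))) hσs
  have hA : 0 ≤ A := (hψ.iterate t).nonneg (hV.isClassKInf_α₂.1.nonneg (norm_nonneg _))
  have hVt : V t (x t) ≤ max (ψ^[t] (V 0 (x 0))) E :=
    le_max_iterate_of_le_max hψ.monotoneOn hψ.mapsTo hE (hψ.le_self_of_lt_self hlt hE)
      (fun k => hV.nonneg k (x k)) fun k hk => by
        rw [hx k hk]
        exact hV.apply_succ_le_max hψ_ge hs k (x k) (hv k hk)
  have hV0 : ψ^[t] (V 0 (x 0)) ≤ A :=
    (hψ.iterate t).monotoneOn (hV.nonneg 0 (x 0)) (hV.isClassKInf_α₂.1.nonneg (norm_nonneg _))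
      (hV.apply_le 0 (x 0))
  have hα₁ : α₁ ‖x t‖ ≤ max A E :=
    (hV.le_apply t (x t)).trans (hVt.trans (max_le_max_right E hV0))
  calc ‖x t‖ ≤ kInv α₁ (max A E) :=
        (hV.isClassKInf_α₁.le_kInv_iff (norm_nonneg _) (le_max_of_le_left hA)).2 hα₁
    _ ≤ kInv α₁ A + kInv α₁ E := hV.isClassKInf_α₁.isClassK_kInv.apply_max_le_add hA hE

end IsISSLyapunov

theorem stmt_12_general (n p : ℕ)
    (q : ℕ → EuclideanSpace ℝ (Fin n) → EuclideanSpace ℝ (Fin p) →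
      EuclideanSpace ℝ (Fin n))
    (V : ℕ → EuclideanSpace ℝ (Fin n) → ℝ)
    (α₁ α₂ α₃ σ : ℝ → ℝ)
    (hα₁ : IsClassKInf α₁) (hα₂ : IsClassKInf α₂) (hα₃ : IsClassKInf α₃)
    (hσ : IsClassK σ)
    (hlow : ∀ (t : ℕ) (x : EuclideanSpace ℝ (Fin n)), α₁ ‖x‖ ≤ V t x)
    (hup : ∀ (t : ℕ) (x : EuclideanSpace ℝ (Fin n)), V t x ≤ α₂ ‖x‖)
    (hdec : ∀ (t : ℕ) (x : EuclideanSpace ℝ (Fin n))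
        (v : EuclideanSpace ℝ (Fin p)),
        V (t + 1) (q t x v) - V t x ≤ -α₃ ‖x‖ + σ ‖v‖) :
    ∃ (β : ℝ → ℕ → ℝ) (γ : ℝ → ℝ), IsClassKL β ∧ IsClassK γ ∧
      ∀ (x : ℕ → EuclideanSpace ℝ (Fin n)) (v : ℕ → EuclideanSpace ℝ (Fin p)),
        (∀ t : ℕ, x (t + 1) = q t (x t) (v t)) →
        ∀ t : ℕ, ∀ ht : 1 ≤ t,
          ‖x t‖ ≤ β ‖x 0‖ t +
            γ ((Finset.range t).sup'
                (Finset.nonempty_range_iff.mpr (Nat.one_le_iff_ne_zero.mp ht))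
                fun k => ‖v k‖) := by
  have hV : IsISSLyapunov q V α₁ α₂ α₃ σ := ⟨hα₁, hα₂, hα₃, hσ, hlow, hup, hdec⟩
  obtain ⟨ψ, hψ, hlt, hψ_ge⟩ := ((hα₃.1.comp hα₂.isClassK_kInv).const_mul
    (by norm_num : (0 : ℝ) < 2⁻¹)).exists_isClassK_sub_le_lt_self
  refine ⟨fun r t => kInv α₁ (ψ^[t] (α₂ r)), fun s => kInv α₁ (α₂ (kInv α₃ (2 * σ s)) + σ s),
    hα₁.isClassK_kInv.isClassKL_comp_iterate hα₂.1 hψ hlt,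
    hα₁.isClassK_kInv.comp ((hα₂.1.comp (hα₃.isClassK_kInv.comp (hσ.const_mul two_pos))).add hσ),
    fun x v hx t ht => hV.norm_le hψ hlt hψ_ge (fun k _ => hx k) ?_ fun k hk => ?_⟩
  · exact (norm_nonneg _).trans (Finset.le_sup' (fun k => ‖v k‖) (Finset.mem_range.2 ht))
  · exact Finset.le_sup' (fun k => ‖v k‖) (Finset.mem_range.2 hk)

/-- Theorem 1 (ISS via an ISS-Lyapunov function, discrete-time, time-varying):
if the system `x(t+1) = q(t, x(t), v(t))` admits an ISS-Lyapunov function `V`,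
then it is globally input-to-state stable. -/
theorem stmt_12 (n p : ℕ) (hn : 0 < n) (hp : 0 < p)
    (q : ℕ → EuclideanSpace ℝ (Fin n) → EuclideanSpace ℝ (Fin p) →
      EuclideanSpace ℝ (Fin n))
    (V : ℕ → EuclideanSpace ℝ (Fin n) → ℝ)
    (hVcont : ∀ t, Continuous (V t))
    (α₁ α₂ α₃ σ : ℝ → ℝ)
    (hα₁ : IsClassKInf α₁) (hα₂ : IsClassKInf α₂) (hα₃ : IsClassKInf α₃)
    (hσ : IsClassK σ)
    (hlow : ∀ (t : ℕ) (x : EuclideanSpace ℝ (Fin n)), α₁ ‖x‖ ≤ V t x)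
    (hup : ∀ (t : ℕ) (x : EuclideanSpace ℝ (Fin n)), V t x ≤ α₂ ‖x‖)
    (hdec : ∀ (t : ℕ) (x : EuclideanSpace ℝ (Fin n))
        (v : EuclideanSpace ℝ (Fin p)),
        V (t + 1) (q t x v) - V t x ≤ -α₃ ‖x‖ + σ ‖v‖) :
    ∃ (β : ℝ → ℕ → ℝ) (γ : ℝ → ℝ), IsClassKL β ∧ IsClassK γ ∧
      ∀ (x : ℕ → EuclideanSpace ℝ (Fin n)) (v : ℕ → EuclideanSpace ℝ (Fin p)),
        (∀ t : ℕ, x (t + 1) = q t (x t) (v t)) →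
        ∀ t : ℕ, ∀ ht : 1 ≤ t,
          ‖x t‖ ≤ β ‖x 0‖ t +
            γ ((Finset.range t).sup'
                (Finset.nonempty_range_iff.mpr (Nat.one_le_iff_ne_zero.mp ht))
                fun k => ‖v k‖) :=
  stmt_12_general n p q V α₁ α₂ α₃ σ hα₁ hα₂ hα₃ hσ hlow hup hdec
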